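/- Let α = log 2/log 3 and ψ(δ) = 2(δ/2)^α − 1 − 2((δ−1)/2)^α for δ ∈ [1,2]. Then there exists a unique δ* ∈ (0,1) such that ψ(δ) > 0 for δ ∈ [1, 1+δ*) and ψ(δ) < 0 for δ ∈ (1+δ*, 2]. -/
import Mathlib


noncomputable def modCont (f : ℝ → ℝ) (a b : ℝ) (δ : ℝ) : ℝ :=
  sSup {d : ℝ | ∃ x ∈ Set.Icc a b, ∃ y ∈ Set.Icc a b, |x - y| ≤ δ ∧ d = |f x - f y|}

def AbsolutelyContinuousOn (g : ℝ → ℝ) (a b : ℝ) : Prop :=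
  ∀ ε > (0:ℝ), ∃ δ > (0:ℝ), ∀ n : ℕ, ∀ x y : ℕ → ℝ,
    (∀ i < n, a ≤ x i ∧ x i ≤ y i ∧ y i ≤ b) →
    (∀ i < n, ∀ j < n, i ≠ j → Disjoint (Set.Ioo (x i) (y i)) (Set.Ioo (x j) (y j))) →
    (∑ i ∈ Finset.range n, (y i - x i)) < δ →
    (∑ i ∈ Finset.range n, |g (y i) - g (x i)|) < ε

/-- The standard Cantor function is the unique monotone function on `[0,1]` with
`c 0 = 0`, `c 1 = 1`, satisfying the self-similarity relations
`c (x/3) = c x / 2` and `c ((x+2)/3) = (1 + c x)/2`. -/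
def IsCantorFunction (c : ℝ → ℝ) : Prop :=
  MonotoneOn c (Set.Icc 0 1) ∧ c 0 = 0 ∧ c 1 = 1 ∧
  (∀ x ∈ Set.Icc (0:ℝ) 1, c (x / 3) = c x / 2) ∧
  (∀ x ∈ Set.Icc (0:ℝ) 1, c ((x + 2) / 3) = (1 + c x) / 2)

noncomputable def cantorAlpha : ℝ := Real.log 2 / Real.log 3

private lemma concave_incr {f : ℝ → ℝ} (hf : StrictConcaveOn ℝ (Set.Ici 0) f)
    {u v h : ℝ} (hu : 0 ≤ u) (huv : u < v) (hh : 0 < h) :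
    f (v + h) - f v < f (u + h) - f u := by
  have hs : 0 < v + h - u := by linarith
  set t : ℝ := (v - u) / (v + h - u) with ht
  have ht0 : 0 < t := div_pos (by linarith) hs
  have ht1 : t < 1 := (div_lt_one hs).2 (by linarith)
  have hmemu : u ∈ Set.Ici (0:ℝ) := hu
  have hmemvh : (v + h) ∈ Set.Ici (0:ℝ) := by simp; linarith
  have hne : u ≠ v + h := by linarith
  have hts : t * (v + h - u) = v - u := div_mul_cancel₀ _ hs.ne'
  have h1 : t * u + (1 - t) * (v + h) = u + h := by linear_combination -hts
  have h2 : (1 - t) * u + t * (v + h) = v := by linear_combination hts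
  have hab1 : t + (1 - t) = 1 := by ring
  have hab2 : (1 - t) + t = 1 := by ring
  have k1 := hf.2 hmemu hmemvh hne ht0 (by linarith) hab1
  have k2 := hf.2 hmemu hmemvh hne (by linarith : (0:ℝ) < 1 - t) ht0 hab2
  simp only [smul_eq_mul] at k1 k2
  rw [h1] at k1
  rw [h2] at k2
  nlinarith [k1, k2]

theorem stmt14 (ψ : ℝ → ℝ)
    (hψ : ∀ δ, ψ δ = 2 * (δ / 2) ^ (Real.log 2 / Real.log 3)
        - 1 - 2 * ((δ - 1) / 2) ^ (Real.log 2 / Real.log 3)) :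
    ∃! δstar : ℝ, δstar ∈ Set.Ioo (0:ℝ) 1 ∧
      (∀ δ ∈ Set.Ico (1:ℝ) (1 + δstar), ψ δ > 0) ∧
      (∀ δ ∈ Set.Ioc (1 + δstar) (2:ℝ), ψ δ < 0) := by
  set α : ℝ := Real.log 2 / Real.log 3 with hαdef
  have hl2 : (0:ℝ) < Real.log 2 := Real.log_pos (by norm_num)
  have hl3 : (0:ℝ) < Real.log 3 := Real.log_pos (by norm_num)
  have hα0 : 0 < α := div_pos hl2 hl3
  have hα1 : α < 1 := (div_lt_one hl3).2 (Real.log_lt_log (by norm_num) (by norm_num))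
  have hconc : StrictConcaveOn ℝ (Set.Ici 0) fun x : ℝ => x ^ α :=
    Real.strictConcaveOn_rpow hα0 hα1
  -- strict antitonicity on [1,2]
  have hanti : ∀ a b : ℝ, 1 ≤ a → a < b → b ≤ 2 → ψ b < ψ a := by
    intro a b ha hab hb
    have key := concave_incr hconc (u := (a-1)/2) (v := a/2) (h := (b-a)/2)
      (by linarith) (by linarith) (by linarith)
    have e1 : a/2 + (b-a)/2 = b/2 := by ring
    have e2 : (a-1)/2 + (b-a)/2 = (b-1)/2 := by ring
    rw [e1, e2] at key
    rw [hψ a, hψ b]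
    linarith
  -- continuity
  have hcont : Continuous ψ := by
    have h1 : Continuous fun δ : ℝ => (δ/2) ^ α :=
      (continuous_id.div_const 2).rpow_const (fun x => Or.inr hα0.le)
    have h2 : Continuous fun δ : ℝ => ((δ-1)/2) ^ α :=
      (((continuous_id.sub continuous_const)).div_const 2).rpow_const (fun x => Or.inr hα0.le)
    have : Continuous fun δ : ℝ => 2 * (δ/2)^α - 1 - 2 * ((δ-1)/2)^α := by
      fun_prop
    convert this using 1
    ext δ; rw [hψ δ]
  -- values at endpoints
  have h2pow : (1:ℝ) < 2 ^ (1 - α) := Real.one_lt_rpow_iff_of_pos (by norm_num) |>.2 (Or.inl ⟨by norm_num, by linarith⟩)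
  have hhalf : ((1:ℝ)/2) ^ α = 2 ^ (1-α) / 2 := by
    rw [Real.div_rpow (by norm_num) (by norm_num), Real.one_rpow,
      Real.rpow_sub (by norm_num), Real.rpow_one]
    field_simp
  have hψ1 : 0 < ψ 1 := by
    rw [hψ 1]
    norm_num
    rw [Real.zero_rpow hα0.ne', hhalf]
    linarith
  have hψ2 : ψ 2 < 0 := by
    rw [hψ 2]
    norm_num
    rw [hhalf]
    linarith
  -- root via IVT
  obtain ⟨r, hrmem, hr0⟩ : ∃ r ∈ Set.Icc (1:ℝ) 2, ψ r = 0 := by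
    have := intermediate_value_Icc' (by norm_num : (1:ℝ) ≤ 2) hcont.continuousOn
    have h0 : (0:ℝ) ∈ Set.Icc (ψ 2) (ψ 1) := ⟨hψ2.le, hψ1.le⟩
    obtain ⟨r, hr, he⟩ := this h0
    exact ⟨r, hr, he⟩
  have hr1 : 1 < r := by
    rcases lt_or_eq_of_le hrmem.1 with h | h
    · exact h
    · exfalso; rw [← h] at hr0; linarith
  have hr2 : r < 2 := by
    rcases lt_or_eq_of_le hrmem.2 with h | h
    · exact h
    · exfalso; rw [h] at hr0; linarith
  refine ⟨r - 1, ⟨⟨by linarith, by linarith⟩, ?_, ?_⟩, ?_⟩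
  · intro δ hδ
    rcases eq_or_lt_of_le hδ.1 with h | h
    · rw [← h]; exact hψ1
    · have : ψ r < ψ δ := hanti δ r hδ.1 (by linarith [hδ.2]) (by linarith)
      linarith
  · intro δ hδ
    have : ψ δ < ψ r := hanti r δ hr1.le (by linarith [hδ.1]) hδ.2
    linarith
  · rintro d ⟨⟨hd0, hd1⟩, hpos, hneg⟩
    by_contra hne
    rcases lt_or_gt_of_ne hne with h | h
    · -- d < r - 1, so 1 + d < r; midpoint m
      set m := (1 + d + r) / 2 with hm
      have hm1 : 1 + d < m := by simp [hm]; linarith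
      have hm2 : m < r := by simp [hm]; linarith
      have hA : ψ m < 0 := hneg m ⟨hm1, by linarith⟩
      have hB : ψ r < ψ m := hanti m r (by linarith) hm2 (by linarith)
      linarith
    · -- r - 1 < d, so r < 1 + d
      set m := (r + (1 + d)) / 2 with hm
      have hm1 : r < m := by simp [hm]; linarith
      have hm2 : m < 1 + d := by simp [hm]; linarith
      have hA : 0 < ψ m := hpos m ⟨by linarith, hm2⟩
      have hB : ψ m < ψ r := hanti r m hr1.le hm1 (by linarith)
      linarith
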